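/- In Berlinkov's automaton A(ψ), if ψ is not satisfiable, then for every word v ∈ {a,b}* of length n there exists an index i ≤ m such that q_{i,n+1} ∈ δ(T, v), where T = {q_{i,1} : 1 ≤ i ≤ m+1}. -/

import Mathlib

/-- The three-letter alphabet {a, b, c}. -/
inductive Letter3 where
  | a | b | c
deriving DecidableEq

/-- Extension of a transition function to words (left-to-right action). -/
def runW {Q A : Type*} (δ : Q → A → Q) : Q → List A → Q
  | q, [] => q
  | q, x :: w => runW δ (δ q x) w

/-- States of Berlinkov's automaton A(ψ) for a SAT instance with m clauses and n
variables.  `q i j` encodes q_{i+1,j+1} (so `q ⟨m⟩ ⟨n⟩` is the state z₁),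
`p i j` encodes p_{i+1,j+1}, and `z0` is the zero state. -/
inductive St (m n : ℕ) where
  | q : Fin (m + 1) → Fin (n + 1) → St m n
  | p : Fin (m + 1) → Fin (n + 1) → St m n
  | z0 : St m n
deriving DecidableEq

/-- The transition function of Berlinkov's automaton A(ψ).  `pos i j` means the
literal x_{j+1} occurs in clause c_{i+1}; `neg i j` means ¬x_{j+1} occurs there. -/
def St.delta {m n : ℕ} (pos neg : Fin m → Fin n → Bool) : St m n → Letter3 → St m n
  | .q i j, .a =>
      if hj : (j : ℕ) < n then
        if hi : (i : ℕ) < m then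
          if pos ⟨i, hi⟩ ⟨j, hj⟩ then .z0 else .q i ⟨(j : ℕ) + 1, by omega⟩
        else .q i ⟨(j : ℕ) + 1, by omega⟩
      else if (i : ℕ) < m then .z0 else .q i ⟨0, by omega⟩
  | .q i j, .b =>
      if hj : (j : ℕ) < n then
        if hi : (i : ℕ) < m then
          if neg ⟨i, hi⟩ ⟨j, hj⟩ then .z0 else .q i ⟨(j : ℕ) + 1, by omega⟩
        else .q i ⟨(j : ℕ) + 1, by omega⟩
      else if (i : ℕ) < m then .z0 else .q i ⟨0, by omega⟩
  | .q i j, .c =>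
      if (j : ℕ) < n then .q i ⟨0, by omega⟩
      else if (i : ℕ) < m then .q ⟨m, by omega⟩ ⟨0, by omega⟩ else .z0
  | .p i j, x =>
      if hj : (j : ℕ) < n then .p i ⟨(j : ℕ) + 1, by omega⟩
      else match x with
        | .c => .q i ⟨0, by omega⟩
        | _ => .z0
  | .z0, _ => .z0

/-- Clause c_{i+1} is satisfied by the truth assignment τ. -/
def clauseSat {m n : ℕ} (pos neg : Fin m → Fin n → Bool) (τ : Fin n → Bool) (i : Fin m) : Prop :=
  ∃ j : Fin n, (pos i j = true ∧ τ j = true) ∨ (neg i j = true ∧ τ j = false)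

/-- The word v(τ) ∈ {a,b}ⁿ encoding a truth assignment. -/
def encWord {n : ℕ} (τ : Fin n → Bool) : List Letter3 :=
  List.ofFn fun j : Fin n => if τ j then Letter3.a else Letter3.b

/-! A word over {a, b} of length n is the encoding v(τ) of an assignment τ. A clause c_i that τ
falsifies contains none of the literals v(τ) reads, so from q_{i,1} the word v(τ) walks along
row i to q_{i,n+1} without ever falling into z₀. -/

theorem runW_ofFn_of_step {Q A : Type*} (δ : Q → A → Q) :
    ∀ {n : ℕ} (s : Fin (n + 1) → Q) (w : Fin n → A),
      (∀ j : Fin n, δ (s j.castSucc) (w j) = s j.succ) →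
        runW δ (s 0) (List.ofFn w) = s (Fin.last n)
  | 0, _, _, _ => rfl
  | n + 1, s, w, hstep => by
    rw [List.ofFn_succ, runW, ← Fin.castSucc_zero, hstep 0]
    exact runW_ofFn_of_step δ (fun j => s j.succ) (fun j => w j.succ) fun j => hstep j.succ

theorem List.eq_encWord_of_length_of_not_mem {n : ℕ} (v : List Letter3) (hv : v.length = n)
    (hc : Letter3.c ∉ v) : ∃ τ : Fin n → Bool, v = encWord τ := by
  refine ⟨fun j => decide (v[j] = .a), List.ext_getElem (by simp [encWord, hv]) ?_⟩
  intro j hj _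
  have hvj : v[j] ≠ .c := fun h => hc (h ▸ List.getElem_mem hj)
  cases h : v[j] <;> simp_all [encWord]

namespace St

variable {m n : ℕ} (pos neg : Fin m → Fin n → Bool)

theorem delta_q_castSucc_a (i : Fin m) (j : Fin n) :
    delta pos neg (.q i.castSucc j.castSucc) .a
      = if pos i j then .z0 else .q i.castSucc j.succ := by
  simp [delta, Fin.succ]

theorem delta_q_castSucc_b (i : Fin m) (j : Fin n) :
    delta pos neg (.q i.castSucc j.castSucc) .b
      = if neg i j then .z0 else .q i.castSucc j.succ := by
  simp [delta, Fin.succ]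

theorem runW_encWord_of_not_clauseSat {τ : Fin n → Bool} {i : Fin m}
    (hi : ¬ clauseSat pos neg τ i) :
    runW (St.delta pos neg) (.q i.castSucc 0) (encWord τ) = .q i.castSucc (Fin.last n) := by
  refine runW_ofFn_of_step (St.delta pos neg) (fun j => .q i.castSucc j : Fin (n + 1) → St m n) _
    fun j => ?_
  have hj := not_exists.mp hi j
  simp only [not_or, not_and] at hj
  cases hτ : τ j <;> simp_all [delta_q_castSucc_a, delta_q_castSucc_b]

end St

/-- If ψ is not satisfiable then for every word v ∈ {a,b}* of length n some state
q_{i,n+1} with i ≤ m lies in the image of T = {q_{i,1} : 1 ≤ i ≤ m+1} under v. -/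
theorem unsat_row_survives
    {m n : ℕ} (pos neg : Fin m → Fin n → Bool)
    (hunsat : ∀ τ : Fin n → Bool, ∃ i : Fin m, ¬ clauseSat pos neg τ i)
    (v : List Letter3) (hv : v.length = n) (hab : Letter3.c ∉ v) :
    ∃ i : Fin (m + 1), (i : ℕ) < m ∧
      ∃ i₀ : Fin (m + 1),
        runW (St.delta pos neg) (St.q i₀ ⟨0, Nat.succ_pos n⟩) v
          = St.q i ⟨n, Nat.lt_succ_self n⟩ := by
  obtain ⟨τ, rfl⟩ := v.eq_encWord_of_length_of_not_mem hv hab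
  obtain ⟨i, hi⟩ := hunsat τ
  exact ⟨i.castSucc, i.isLt, i.castSucc, St.runW_encWord_of_not_clauseSat pos neg hi⟩
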